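/- Let F be a symmetric n×n real matrix, Q an n×n orthogonal matrix, Θ the diagonal matrix with Θ_ii = (QᵀFQ)_ii, and D any diagonal matrix. Then ‖F − QΘQᵀ‖_F ≤ ‖F − QDQᵀ‖_F. -/
import Mathlib


open Matrix

noncomputable def frobeniusNorm' {n : ℕ} (M : Matrix (Fin n) (Fin n) ℝ) : ℝ :=
  Real.sqrt (∑ i, ∑ j, (M i j) ^ 2)

lemma sq_sum_eq_trace {n : ℕ} (N : Matrix (Fin n) (Fin n) ℝ) :
    ∑ i, ∑ j, (N i j) ^ 2 = Matrix.trace (Nᵀ * N) := by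
  simp only [Matrix.trace, Matrix.diag, Matrix.mul_apply, Matrix.transpose_apply, sq]
  rw [Finset.sum_comm]

lemma sq_sum_conj {n : ℕ} (Q M : Matrix (Fin n) (Fin n) ℝ) (hQ : Qᵀ * Q = 1) :
    ∑ i, ∑ j, ((Qᵀ * M * Q) i j) ^ 2 = ∑ i, ∑ j, (M i j) ^ 2 := by
  have hQ' : Q * Qᵀ = 1 := mul_eq_one_comm.mp hQ
  rw [sq_sum_eq_trace, sq_sum_eq_trace]
  have h1 : (Qᵀ * M * Q)ᵀ * (Qᵀ * M * Q) = Qᵀ * (Mᵀ * M) * Q := by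
    have : (Qᵀ * M * Q)ᵀ = Qᵀ * Mᵀ * Q := by
      simp [Matrix.transpose_mul, Matrix.mul_assoc]
    rw [this]
    calc Qᵀ * Mᵀ * Q * (Qᵀ * M * Q) = Qᵀ * Mᵀ * (Q * Qᵀ) * M * Q := by
          simp only [Matrix.mul_assoc]
      _ = Qᵀ * (Mᵀ * M) * Q := by rw [hQ']; simp [Matrix.mul_assoc]
  rw [h1, Matrix.trace_mul_comm, ← Matrix.mul_assoc, hQ', Matrix.one_mul]

theorem stmt1 {n : ℕ} (F Q : Matrix (Fin n) (Fin n) ℝ)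
    (hF : F.IsSymm) (hQ : Qᵀ * Q = 1)
    (Θ : Matrix (Fin n) (Fin n) ℝ)
    (hΘ : Θ = Matrix.diagonal (fun i => (Qᵀ * F * Q) i i))
    (D : Matrix (Fin n) (Fin n) ℝ) (hD : D.IsDiag) :
    frobeniusNorm' (F - Q * Θ * Qᵀ) ≤ frobeniusNorm' (F - Q * D * Qᵀ) := by
  have hQ' : Q * Qᵀ = 1 := mul_eq_one_comm.mp hQ
  set G := Qᵀ * F * Q with hG
  -- conjugating F - Q*X*Qᵀ by Qᵀ gives G - X
  have hconj : ∀ X : Matrix (Fin n) (Fin n) ℝ,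
      Qᵀ * (F - Q * X * Qᵀ) * Q = G - X := by
    intro X
    rw [Matrix.mul_sub, Matrix.sub_mul, hG]
    congr 1
    calc Qᵀ * (Q * X * Qᵀ) * Q = (Qᵀ * Q) * X * (Qᵀ * Q) := by
          simp only [Matrix.mul_assoc]
      _ = X := by rw [hQ]; simp
  have hsum : ∀ X : Matrix (Fin n) (Fin n) ℝ,
      ∑ i, ∑ j, ((F - Q * X * Qᵀ) i j) ^ 2 = ∑ i, ∑ j, ((G - X) i j) ^ 2 := by
    intro X
    rw [← sq_sum_conj Q _ hQ, hconj]
  unfold frobeniusNorm'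
  apply Real.sqrt_le_sqrt
  rw [hsum, hsum]
  apply Finset.sum_le_sum
  intro i _
  apply Finset.sum_le_sum
  intro j _
  by_cases hij : i = j
  · subst hij
    have : (G - Θ) i i = 0 := by
      simp [hΘ, Matrix.sub_apply, Matrix.diagonal_apply_eq]
    rw [this]
    simpa using sq_nonneg ((G - D) i i)
  · have h1 : Θ i j = 0 := by simp [hΘ, Matrix.diagonal_apply_ne _ hij]
    have h2 : D i j = 0 := hD hij
    simp [Matrix.sub_apply, h1, h2]
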